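/- For every x > 0, the Gamma function satisfies √(2π) x^{x+1/2} e^{-x + 1/(12x+1)} ≤ Γ(x+1) ≤ √(2π) x^{x+1/2} e^{-x + 1/(12x)}. -/

import Mathlib

/-!
Write `Γ(x + 1) = √(2π) x^(x + 1/2) e^(-x + μ x)` with Binet's function `μ x = ∑ₙ δ (x + n)`,
`δ y = (y + 1/2) log (1 + 1/y) - 1`. Comparing derivatives squeezes `δ y` between
`1/(12y+1) - 1/(12(y+1)+1)` and `1/(12y) - 1/(12(y+1))`, and these bounds telescope to
`1/(12x+1) ≤ μ x ≤ 1/(12x)`. The representation itself comes from Bohr–Mollerup: `δ` is convex,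
hence so is `(x - 1/2) log x - x + μ x`, and `μ x - μ (x + 1) = δ x` is the functional equation
of `log Γ`. Its constant is `√(2π)` because `μ n → 0` and Stirling's formula holds for `n!`.
-/

open Real Filter Topology Set Polynomial

lemma tendsto_quadratic_div_cubic_atTop (a b c p q r s : ℝ) (hp : p ≠ 0) :
    Tendsto (fun y => (a * y ^ 2 + b * y + c) / (p * y ^ 3 + q * y ^ 2 + r * y + s))
      atTop (𝓝 0) := by
  have hQ : (C p * X ^ 3 + C q * X ^ 2 + C r * X + C s : ℝ[X]).degree = 3 := by
    compute_degree!
  have h := div_tendsto_atTop_zero_of_degree_lt (C a * X ^ 2 + C b * X + C c : ℝ[X])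
    (C p * X ^ 3 + C q * X ^ 2 + C r * X + C s) (by rw [hQ]; compute_degree!)
  simpa only [eval_add, eval_mul, eval_C, eval_pow, eval_X] using h

lemma nonneg_of_hasDerivAt_nonpos_of_tendsto_zero {f f' : ℝ → ℝ} {a : ℝ}
    (hf : ∀ y, a < y → HasDerivAt f (f' y) y) (hf' : ∀ y, a < y → f' y ≤ 0)
    (hlim : Tendsto f atTop (𝓝 0)) {y : ℝ} (hy : a < y) : 0 ≤ f y := by
  have hanti : AntitoneOn f (Ioi a) :=
    antitoneOn_of_hasDerivWithinAt_nonpos (convex_Ioi a)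
      (fun z hz => (hf z hz).continuousAt.continuousWithinAt)
      (fun z hz => (hf z (by simpa using hz)).hasDerivWithinAt)
      (fun z hz => hf' z (by simpa using hz))
  refine le_of_tendsto hlim ?_
  filter_upwards [eventually_ge_atTop y] with z hz
  exact hanti hy (hy.trans_le hz) hz

lemma hasDerivAt_log_add_one_sub_log {y : ℝ} (hy : 0 < y) :
    HasDerivAt (fun z => log (z + 1) - log z) (-1 / (y * (y + 1))) y := by
  have h := (((hasDerivAt_id y).add_const 1).log (by simp; positivity)).sub
    (hasDerivAt_log hy.ne')
  refine h.congr_deriv ?_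
  simp only [id_eq]
  field_simp
  ring

lemma tendsto_log_add_one_sub_log_atTop :
    Tendsto (fun y => log (y + 1) - log y) atTop (𝓝 0) := by
  have h : Tendsto (fun y : ℝ => log (1 + y⁻¹)) atTop (𝓝 (log (1 + 0))) :=
    (continuousAt_log (by norm_num)).tendsto.comp (tendsto_const_nhds.add tendsto_inv_atTop_zero)
  rw [add_zero, log_one] at h
  refine h.congr' ?_
  filter_upwards [eventually_gt_atTop 0] with y hy
  rw [← log_div (by positivity) hy.ne', add_div, div_self hy.ne', one_div]

/- Both rational functions `R` are chosen so that `(y + 1 / 2) * R y - 1` telescopes: it is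
`1 / (12 * y) - 1 / (12 * (y + 1))`, resp. `1 / (12 * y + 1) - 1 / (12 * (y + 1) + 1)`. -/

lemma log_add_one_sub_log_le {y : ℝ} (hy : 0 < y) :
    log (y + 1) - log y ≤ (12 * y ^ 2 + 12 * y + 1) / (12 * y ^ 3 + 18 * y ^ 2 + 6 * y) := by
  refine sub_nonneg.1 <| nonneg_of_hasDerivAt_nonpos_of_tendsto_zero
    (f := fun z => (12 * z ^ 2 + 12 * z + 1) / (12 * z ^ 3 + 18 * z ^ 2 + 6 * z)
      - (log (z + 1) - log z)) (f' := fun z => -6 / (12 * z ^ 3 + 18 * z ^ 2 + 6 * z) ^ 2)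
    (fun z hz => ?_) (fun z _ => div_nonpos_of_nonpos_of_nonneg (by norm_num) (sq_nonneg _))
    ?_ hy
  · have hN : HasDerivAt (fun z : ℝ => 12 * z ^ 2 + 12 * z + 1) (24 * z + 12) z := by
      have := (((hasDerivAt_pow 2 z).const_mul 12).add ((hasDerivAt_id z).const_mul 12)).add_const 1
      exact this.congr_deriv (by simp; ring)
    have hD : HasDerivAt (fun z : ℝ => 12 * z ^ 3 + 18 * z ^ 2 + 6 * z)
        (36 * z ^ 2 + 36 * z + 6) z := by
      have := (((hasDerivAt_pow 3 z).const_mul 12).add ((hasDerivAt_pow 2 z).const_mul 18)).add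
        ((hasDerivAt_id z).const_mul 6)
      exact this.congr_deriv (by simp; ring)
    refine ((hN.div hD (by positivity)).sub (hasDerivAt_log_add_one_sub_log hz)).congr_deriv ?_
    field_simp
    ring
  · simpa using (tendsto_quadratic_div_cubic_atTop 12 12 1 12 18 6 0 (by norm_num)).sub
      tendsto_log_add_one_sub_log_atTop

lemma le_log_add_one_sub_log {y : ℝ} (hy : 0 < y) :
    (288 * y ^ 2 + 336 * y + 50) / (288 * y ^ 3 + 480 * y ^ 2 + 194 * y + 13)
      ≤ log (y + 1) - log y := by
  refine sub_nonneg.1 <| nonneg_of_hasDerivAt_nonpos_of_tendsto_zero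
    (f := fun z => (log (z + 1) - log z)
      - (288 * z ^ 2 + 336 * z + 50) / (288 * z ^ 3 + 480 * z ^ 2 + 194 * z + 13))
    (f' := fun z => (-4608 * z ^ 3 - 4272 * z ^ 2 + 288 * z - 169)
      / (z * (z + 1) * (288 * z ^ 3 + 480 * z ^ 2 + 194 * z + 13) ^ 2))
    (fun z hz => ?_) (fun z hz => ?_) ?_ hy
  · have hN : HasDerivAt (fun z : ℝ => 288 * z ^ 2 + 336 * z + 50) (576 * z + 336) z := by
      have := (((hasDerivAt_pow 2 z).const_mul 288).add
        ((hasDerivAt_id z).const_mul 336)).add_const 50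
      exact this.congr_deriv (by simp; ring)
    have hD : HasDerivAt (fun z : ℝ => 288 * z ^ 3 + 480 * z ^ 2 + 194 * z + 13)
        (864 * z ^ 2 + 960 * z + 194) z := by
      have := ((((hasDerivAt_pow 3 z).const_mul 288).add ((hasDerivAt_pow 2 z).const_mul 480)).add
        ((hasDerivAt_id z).const_mul 194)).add_const 13
      exact this.congr_deriv (by simp; ring)
    refine ((hasDerivAt_log_add_one_sub_log hz).sub (hN.div hD (by positivity))).congr_deriv ?_
    field_simp
    ring
  · refine div_nonpos_of_nonpos_of_nonneg ?_ (by positivity)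
    nlinarith [sq_nonneg (89 * z - 3), pow_pos hz 3]
  · simpa using tendsto_log_add_one_sub_log_atTop.sub
      (tendsto_quadratic_div_cubic_atTop 288 336 50 288 480 194 13 (by norm_num))

noncomputable def binetDelta (y : ℝ) : ℝ := (y + 1 / 2) * (log (y + 1) - log y) - 1

lemma binetDelta_le {y : ℝ} (hy : 0 < y) :
    binetDelta y ≤ 1 / (12 * y) - 1 / (12 * (y + 1)) := by
  have hy' : 0 ≤ y + 1 / 2 := by linarith
  calc binetDelta y
      ≤ (y + 1 / 2) * ((12 * y ^ 2 + 12 * y + 1) / (12 * y ^ 3 + 18 * y ^ 2 + 6 * y)) - 1 := by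
        unfold binetDelta; gcongr; exact log_add_one_sub_log_le hy
    _ = 1 / (12 * y) - 1 / (12 * (y + 1)) := by field_simp; ring

lemma le_binetDelta {y : ℝ} (hy : 0 < y) :
    1 / (12 * y + 1) - 1 / (12 * (y + 1) + 1) ≤ binetDelta y := by
  have hy' : 0 ≤ y + 1 / 2 := by linarith
  calc 1 / (12 * y + 1) - 1 / (12 * (y + 1) + 1)
      = (y + 1 / 2) * ((288 * y ^ 2 + 336 * y + 50)
          / (288 * y ^ 3 + 480 * y ^ 2 + 194 * y + 13)) - 1 := by field_simp; ring
    _ ≤ binetDelta y := by unfold binetDelta; gcongr; exact le_log_add_one_sub_log hy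

lemma binetDelta_nonneg {y : ℝ} (hy : 0 < y) : 0 ≤ binetDelta y :=
  (sub_nonneg.2 (one_div_le_one_div_of_le (by positivity) (by linarith))).trans (le_binetDelta hy)

lemma hasDerivAt_binetDelta {y : ℝ} (hy : 0 < y) :
    HasDerivAt binetDelta (log (y + 1) - log y - (y + 1 / 2) / (y * (y + 1))) y := by
  have h := (((hasDerivAt_id y).add_const (1 / 2)).mul
    (hasDerivAt_log_add_one_sub_log hy)).sub_const 1
  refine h.congr_deriv ?_
  simp only [id_eq]
  ring

lemma hasDerivAt_deriv_binetDelta {y : ℝ} (hy : 0 < y) :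
    HasDerivAt (fun z => log (z + 1) - log z - (z + 1 / 2) / (z * (z + 1)))
      (1 / (2 * (y * (y + 1)) ^ 2)) y := by
  have hD : HasDerivAt (fun z : ℝ => z * (z + 1)) (2 * y + 1) y := by
    have := (hasDerivAt_id y).mul ((hasDerivAt_id y).add_const 1)
    exact this.congr_deriv (by simp; ring)
  have h := (hasDerivAt_log_add_one_sub_log hy).sub
    (((hasDerivAt_id y).add_const (1 / 2)).div hD (by positivity))
  refine h.congr_deriv ?_
  simp only [id_eq]
  field_simp
  ring

lemma convexOn_binetDelta : ConvexOn ℝ (Ioi 0) binetDelta := by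
  refine convexOn_of_hasDerivWithinAt2_nonneg (convex_Ioi 0)
    (f' := fun z => log (z + 1) - log z - (z + 1 / 2) / (z * (z + 1)))
    (f'' := fun z => 1 / (2 * (z * (z + 1)) ^ 2))
    (fun y hy => (hasDerivAt_binetDelta hy).continuousAt.continuousWithinAt)
    (fun y hy => ?_) (fun y hy => ?_) (fun y hy => ?_)
  all_goals rw [interior_Ioi] at hy
  · exact (hasDerivAt_binetDelta hy).hasDerivWithinAt
  · exact (hasDerivAt_deriv_binetDelta hy).hasDerivWithinAt
  · positivity

lemma hasSum_sub_add_one_of_antitoneOn {f : ℝ → ℝ} {x : ℝ} (hf : AntitoneOn f (Ici x))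
    (hlim : Tendsto f atTop (𝓝 0)) :
    HasSum (fun n : ℕ => f (x + n) - f (x + n + 1)) (f x) := by
  have hmem (t : ℝ) (ht : 0 ≤ t) : x + t ∈ Ici x := by simpa using ht
  have hnonneg (n : ℕ) : 0 ≤ f (x + n) - f (x + n + 1) :=
    sub_nonneg.2 <| hf (hmem n n.cast_nonneg) (by rw [add_assoc]; exact hmem _ (by positivity))
      (by linarith)
  refine (hasSum_iff_tendsto_nat_of_nonneg hnonneg _).2 ?_
  have hpartial (n : ℕ) :
      ∑ i ∈ Finset.range n, (f (x + i) - f (x + i + 1)) = f x - f (x + n) := by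
    have := Finset.sum_range_sub' (fun i : ℕ => f (x + i)) n
    push_cast [← add_assoc, add_zero] at this
    exact this
  simp_rw [hpartial]
  simpa using tendsto_const_nhds.sub
    (hlim.comp (tendsto_atTop_add_const_left _ x tendsto_natCast_atTop_atTop))

lemma hasSum_one_div_sub_one_div_add_one {a b x : ℝ} (ha : 0 < a) (hb : 0 ≤ b) (hx : 0 < x) :
    HasSum (fun n : ℕ => 1 / (a * (x + n) + b) - 1 / (a * (x + n + 1) + b)) (1 / (a * x + b)) :=
  hasSum_sub_add_one_of_antitoneOn (f := fun y => 1 / (a * y + b))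
    (fun y hy z _ hyz => one_div_le_one_div_of_le (by have := hx.trans_le hy; positivity)
      (by gcongr))
    (tendsto_const_nhds.div_atTop (tendsto_atTop_add_const_right _ b
      (tendsto_id.const_mul_atTop ha)))

noncomputable def binetMu (x : ℝ) : ℝ := ∑' n : ℕ, binetDelta (x + n)

lemma hasSum_one_div_twelve_mul_sub {x : ℝ} (hx : 0 < x) :
    HasSum (fun n : ℕ => 1 / (12 * (x + n)) - 1 / (12 * (x + n + 1))) (1 / (12 * x)) := by
  simpa using hasSum_one_div_sub_one_div_add_one (a := 12) (b := 0) (by norm_num) le_rfl hx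

lemma summable_binetDelta {x : ℝ} (hx : 0 < x) : Summable fun n : ℕ => binetDelta (x + n) :=
  (hasSum_one_div_twelve_mul_sub hx).summable.of_nonneg_of_le
    (fun n => binetDelta_nonneg (by positivity)) (fun n => binetDelta_le (by positivity))

lemma binetMu_le {x : ℝ} (hx : 0 < x) : binetMu x ≤ 1 / (12 * x) :=
  hasSum_le (fun n => binetDelta_le (by positivity)) (summable_binetDelta hx).hasSum
    (hasSum_one_div_twelve_mul_sub hx)

lemma le_binetMu {x : ℝ} (hx : 0 < x) : 1 / (12 * x + 1) ≤ binetMu x :=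
  hasSum_le (fun n => le_binetDelta (by positivity))
    (hasSum_one_div_sub_one_div_add_one (by norm_num) zero_le_one hx)
    (summable_binetDelta hx).hasSum

lemma binetMu_eq_binetDelta_add {x : ℝ} (hx : 0 < x) :
    binetMu x = binetDelta x + binetMu (x + 1) := by
  rw [binetMu, (summable_binetDelta hx).tsum_eq_zero_add, binetMu]
  push_cast
  simp only [add_zero, add_assoc, add_comm (1 : ℝ)]

lemma tendsto_binetMu_atTop : Tendsto binetMu atTop (𝓝 0) := by
  refine tendsto_of_tendsto_of_tendsto_of_le_of_le' (h := fun x => 1 / (12 * x)) tendsto_const_nhds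
    (tendsto_const_nhds.div_atTop (tendsto_id.const_mul_atTop (by norm_num))) ?_ ?_
  all_goals filter_upwards [eventually_gt_atTop 0] with x hx
  · exact (by positivity : (0 : ℝ) ≤ 1 / (12 * x + 1)).trans (le_binetMu hx)
  · exact binetMu_le hx

theorem ConvexOn.tsum {ι E : Type*} [AddCommMonoid E] [Module ℝ E] {s : Set E}
    {f : ι → E → ℝ} (hs : Convex ℝ s) (hf : ∀ i, ConvexOn ℝ s (f i))
    (hsum : ∀ x ∈ s, Summable fun i => f i x) : ConvexOn ℝ s fun x => ∑' i, f i x := by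
  refine ⟨hs, fun x hx y hy a b ha hb hab => ?_⟩
  calc ∑' i, f i (a • x + b • y) ≤ ∑' i, (a • f i x + b • f i y) :=
        Summable.tsum_le_tsum (fun i => (hf i).2 hx hy ha hb hab) (hsum _ (hs hx hy ha hb hab))
          (((hsum x hx).mul_left a).add ((hsum y hy).mul_left b))
    _ = a • ∑' i, f i x + b • ∑' i, f i y := by
        simp only [smul_eq_mul]
        rw [((hsum x hx).mul_left a).tsum_add ((hsum y hy).mul_left b), tsum_mul_left,
          tsum_mul_left]

lemma convexOn_binetMu : ConvexOn ℝ (Ioi 0) binetMu :=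
  ConvexOn.tsum (convex_Ioi 0)
    (fun n => (convexOn_binetDelta.translate_left (n : ℝ)).subset
      (fun x (hx : 0 < x) => show 0 < (n : ℝ) + x by positivity) (convex_Ioi 0))
    (fun _ hx => summable_binetDelta hx)

noncomputable def binetLogGamma (x : ℝ) : ℝ := (x - 1 / 2) * log x - x + binetMu x

lemma binetLogGamma_add_one {x : ℝ} (hx : 0 < x) :
    binetLogGamma (x + 1) = binetLogGamma x + log x := by
  rw [binetLogGamma, binetLogGamma, binetMu_eq_binetDelta_add hx, binetDelta]
  ring

lemma convexOn_binetLogGamma : ConvexOn ℝ (Ioi 0) binetLogGamma := by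
  have hmul_log : ConvexOn ℝ (Ioi 0) fun x => x * log x :=
    convexOn_mul_log.subset Ioi_subset_Ici_self (convex_Ioi 0)
  have hconcave : ConcaveOn ℝ (Ioi 0) fun x => (1 / 2 : ℝ) • log x + x :=
    (strictConcaveOn_log_Ioi.concaveOn.smul (by norm_num)).add (concaveOn_id (convex_Ioi 0))
  refine ((hmul_log.sub hconcave).add convexOn_binetMu).congr fun x _ => ?_
  simp only [binetLogGamma, Pi.add_apply, Pi.sub_apply, smul_eq_mul]
  ring

lemma Gamma_eq_exp_binetLogGamma {x : ℝ} (hx : 0 < x) :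
    Gamma x = exp (binetLogGamma x - binetLogGamma 1) := by
  refine (eq_Gamma_of_log_convex (f := fun x => exp (binetLogGamma x - binetLogGamma 1))
    ?_ (fun hy => ?_) (fun _ => exp_pos _) (by simp) hx).symm
  · refine (convexOn_binetLogGamma.add_const (-binetLogGamma 1)).congr fun x _ => ?_
    simp [sub_eq_add_neg]
  · rw [binetLogGamma_add_one hy, add_sub_right_comm, exp_add, exp_log hy, mul_comm]

lemma Gamma_add_one_eq {x : ℝ} (hx : 0 < x) :
    Gamma (x + 1) = exp (-binetLogGamma 1) * x ^ (x + 1 / 2) * exp (-x + binetMu x) := by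
  rw [Gamma_eq_exp_binetLogGamma (by positivity), binetLogGamma_add_one hx, rpow_def_of_pos hx,
    ← exp_add, ← exp_add, binetLogGamma]
  ring_nf

lemma exp_neg_binetLogGamma_one : exp (-binetLogGamma 1) = √(2 * π) := by
  have hseq : ∀ᶠ n : ℕ in atTop,
      Stirling.stirlingSeq n = exp (-binetLogGamma 1) / √2 * exp (binetMu n) := by
    filter_upwards [eventually_gt_atTop 0] with n hn
    have hn' : (0 : ℝ) < n := by exact_mod_cast hn
    rw [Stirling.stirlingSeq, ← Gamma_nat_eq_factorial, Gamma_add_one_eq hn', rpow_add hn',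
      rpow_natCast, ← sqrt_eq_rpow, sqrt_mul zero_le_two, div_pow, exp_one_pow, exp_add]
    field_simp
    rw [← exp_add, neg_add_cancel, exp_zero]
  have hlim : Tendsto Stirling.stirlingSeq atTop (𝓝 (exp (-binetLogGamma 1) / √2 * exp 0)) :=
    (tendsto_const_nhds.mul ((continuous_exp.tendsto 0).comp
      (tendsto_binetMu_atTop.comp tendsto_natCast_atTop_atTop))).congr'
      (hseq.mono fun _ h => h.symm)
  have hc := tendsto_nhds_unique hlim Stirling.tendsto_stirlingSeq_sqrt_pi
  rw [exp_zero, mul_one, div_eq_iff (by positivity)] at hc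
  rw [hc, sqrt_mul zero_le_two, mul_comm]

theorem stmt_6 (x : ℝ) (hx : 0 < x) :
    Real.sqrt (2 * π) * x ^ (x + 1 / 2) * Real.exp (-x + 1 / (12 * x + 1)) ≤
      Real.Gamma (x + 1) ∧
    Real.Gamma (x + 1) ≤
      Real.sqrt (2 * π) * x ^ (x + 1 / 2) * Real.exp (-x + 1 / (12 * x)) := by
  rw [Gamma_add_one_eq hx, exp_neg_binetLogGamma_one]
  exact ⟨by gcongr; exact le_binetMu hx, by gcongr; exact binetMu_le hx⟩
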